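/- For 1 ≤ k ≤ n−1, the null space of the codifferential δ_k on Q_1^{*,-}Λ^k equals the range of δ_{k+1} applied to Q_1^{*,-}Λ^{k+1}. -/

import Mathlib

open MvPolynomial Finset MeasureTheory

/-- Strictly increasing `k`-indices in `{1,…,n}`, modelled as `k`-element subsets of `Fin n`. -/
abbrev Idx (n k : ℕ) := {s : Finset (Fin n) // s.card = k}

/-- A differential `k`-form with polynomial coefficients on `ℝⁿ`:
one polynomial coefficient for each increasing `k`-index. -/
abbrev Form (n k : ℕ) := Idx n k → MvPolynomial (Fin n) ℝ

/-- The sign `(-1)^{#\{j ∈ s : j < i\}}`. -/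
noncomputable def sgn {n : ℕ} (s : Finset (Fin n)) (i : Fin n) : ℝ :=
  (-1) ^ (s.filter (· < i)).card

def eraseIdx {n k : ℕ} (s : Idx n (k+1)) {i : Fin n} (hi : i ∈ s.1) : Idx n k :=
  ⟨s.1.erase i, by simp [Finset.card_erase_of_mem hi, s.2]⟩

def insertIdx {n k : ℕ} (s : Idx n k) {i : Fin n} (hi : i ∉ s.1) : Idx n (k+1) :=
  ⟨insert i s.1, by simp [Finset.card_insert_of_notMem hi, s.2]⟩

/-- The exterior derivative `d^k`. -/
noncomputable def extd (n k : ℕ) : Form n k →ₗ[ℝ] Form n (k+1) where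
  toFun ω := fun s => ∑ i ∈ s.1.attach, sgn s.1 i.1 • pderiv i.1 (ω (eraseIdx s i.2))
  map_add' ω η := by
    funext s
    simp [Finset.sum_add_distrib, smul_add]
  map_smul' c ω := by
    funext s
    simp only [Pi.smul_apply, RingHom.id_apply]
    rw [Finset.smul_sum]
    exact Finset.sum_congr rfl (fun i _ => by rw [(pderiv i.1).map_smul, smul_comm])

/-- The Koszul operator `κ` (contraction with the position vector field). -/
noncomputable def koszul (n k : ℕ) : Form n (k+1) →ₗ[ℝ] Form n k where
  toFun ω := fun s =>
    ∑ i ∈ (s.1ᶜ).attach, sgn s.1 i.1 • (X i.1 * ω (insertIdx s (Finset.mem_compl.mp i.2)))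
  map_add' ω η := by
    funext s
    simp [Finset.sum_add_distrib, mul_add, smul_add]
  map_smul' c ω := by
    funext s
    simp only [Pi.smul_apply, RingHom.id_apply, mul_smul_comm]
    rw [Finset.smul_sum]
    exact Finset.sum_congr rfl (fun i _ => (smul_comm _ _ _))

/-- The codifferential `δ_{k+1}` (the formal adjoint of `d^k` on Euclidean `ℝⁿ`,
which coincides with `(-1)^{(k+1)n} ⋆ d^{n-k-1} ⋆`). -/
noncomputable def codiff (n k : ℕ) : Form n (k+1) →ₗ[ℝ] Form n k where
  toFun ω := fun s =>
    -∑ i ∈ (s.1ᶜ).attach, sgn s.1 i.1 • pderiv i.1 (ω (insertIdx s (Finset.mem_compl.mp i.2)))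
  map_add' ω η := by
    funext s
    simp [Finset.sum_add_distrib, smul_add]
    ring
  map_smul' c ω := by
    funext s
    simp only [Pi.smul_apply, RingHom.id_apply, smul_neg, neg_inj]
    rw [Finset.smul_sum]
    exact Finset.sum_congr rfl (fun i _ => by rw [(pderiv i.1).map_smul, smul_comm])

/-- The operator `κ^δ = ⋆ ∘ κ ∘ ⋆` (exterior multiplication by `Σ xᵢ dxⁱ`, up to sign). -/
noncomputable def kappaDelta (n k : ℕ) : Form n k →ₗ[ℝ] Form n (k+1) where
  toFun ω := fun s => ∑ i ∈ s.1.attach, sgn s.1 i.1 • (X i.1 * ω (eraseIdx s i.2))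
  map_add' ω η := by
    funext s
    simp [Finset.sum_add_distrib, mul_add, smul_add]
  map_smul' c ω := by
    funext s
    simp only [Pi.smul_apply, RingHom.id_apply, mul_smul_comm]
    rw [Finset.smul_sum]
    exact Finset.sum_congr rfl (fun i _ => (smul_comm _ _ _))

/-- Sign of the permutation `(t, tᶜ) ↦ (1,…,n)`, i.e. `⋆ dx^t = starSign t · dx^{tᶜ}`. -/
noncomputable def starSign {n : ℕ} (t : Finset (Fin n)) : ℝ :=
  (-1) ^ (∑ i ∈ t, ((tᶜ).filter (· < i)).card)

/-- The Hodge star operator on `k`-forms on `ℝⁿ`, `k + l = n`. -/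
noncomputable def hodge (n k l : ℕ) (h : k + l = n) : Form n k →ₗ[ℝ] Form n l where
  toFun ω := fun s => starSign (s.1ᶜ) •
    ω ⟨s.1ᶜ, by rw [Finset.card_compl, s.2, Fintype.card_fin]; omega⟩
  map_add' ω η := by funext s; simp [smul_add]
  map_smul' c ω := by funext s; simp only [Pi.smul_apply, RingHom.id_apply]; rw [smul_comm]

/-- The monomial form `x_τ dx^σ`. -/
noncomputable def monForm (n k : ℕ) (τ : Finset (Fin n)) (σ : Idx n k) : Form n k :=
  fun s => if s = σ then ∏ i ∈ τ, X i else 0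

/-- `Q_1^-Λ^k = span{ x_τ dx^σ : |σ| = k, 0 ≤ |τ| ≤ n-k, τ ⊆ σᶜ }`. -/
noncomputable def Qm (n k : ℕ) : Submodule ℝ (Form n k) :=
  Submodule.span ℝ
    {ω | ∃ (τ : Finset (Fin n)) (σ : Idx n k), τ.card ≤ n - k ∧ τ ⊆ (σ.1)ᶜ ∧ ω = monForm n k τ σ}

/-- `Q_1^{*,-}Λ^k = span{ x_τ' dx^σ' : |σ'| = k, 0 ≤ |τ'| ≤ k, τ' ⊆ σ' }`. -/
noncomputable def Qs (n k : ℕ) : Submodule ℝ (Form n k) :=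
  Submodule.span ℝ
    {ω | ∃ (τ : Finset (Fin n)) (σ : Idx n k), τ.card ≤ k ∧ τ ⊆ σ.1 ∧ ω = monForm n k τ σ}

/-- `P_0Λ^k`: forms with constant coefficients. -/
noncomputable def P0 (n k : ℕ) : Submodule ℝ (Form n k) :=
  Submodule.span ℝ {ω | ∃ σ : Idx n k, ω = monForm n k ∅ σ}

/-- The Whitney space `P_1^-Λ^k = P_0Λ^k + κ(P_0Λ^{k+1})`. -/
noncomputable def Pm (n k : ℕ) : Submodule ℝ (Form n k) :=
  P0 n k ⊔ Submodule.map (koszul n k) (P0 n (k+1))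

/-- The star Whitney space `P_1^{*,-}Λ^{k+1} = P_0Λ^{k+1} + κ^δ(P_0Λ^k)`. -/
noncomputable def PsS (n k : ℕ) : Submodule ℝ (Form n (k+1)) :=
  P0 n (k+1) ⊔ Submodule.map (kappaDelta n k) (P0 n k)

/-- `L²` inner product of `k`-forms on the centered box `[-r, r]`. -/
noncomputable def binner (n k : ℕ) (r : Fin n → ℝ) (ω η : Form n k) : ℝ :=
  ∑ s : Idx n k, ∫ x in Set.Icc (fun i => -(r i)) r, eval x (ω s * η s)

/-- `L²` inner product of `k`-forms on the reference cube `T = [-1,1]ⁿ`. -/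
noncomputable def finner (n k : ℕ) (ω η : Form n k) : ℝ :=
  binner n k (fun _ => (1 : ℝ)) ω η

/-!
Write `E = ∑ᵢ xᵢ ∂ᵢ` for the Euler operator acting on coefficients and `c = n - (k+1) > 0`. A
direct computation gives the Koszul-type homotopy formula `κ^δ δ + δ κ^δ = -(E + c)` on
`(k+1)`-forms: in the double sum the off-diagonal terms cancel in pairs and the diagonal ones
produce `E` and the count `c` of missing indices. Both `δ` and `κ^δ` map the spaces
`Q_1^{*,-}Λ^•` into one another, and `E` acts on `x_τ dx^σ` by `|τ|`; since `δ E = (E + 1) δ`, the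
operator `E + c` is an injective endomorphism of the finite-dimensional space
`ker δ ∩ Q_1^{*,-}Λ^{k+1}`, hence onto it. Writing `ω = -(E + c) ξ` there gives `ω = δ (κ^δ ξ)`.
The reverse inclusion is `δ δ = 0`.
-/

namespace Finset

variable {α : Type*} [DecidableEq α]

lemma insert_eq_iff_mem_and_eq_erase {s t : Finset α} (hcard : s.card + 1 = t.card) (j : α) :
    insert j s = t ↔ j ∈ t ∧ s = t.erase j := by
  constructor
  · rintro rfl
    have hj : j ∉ s := fun hj => by rw [insert_eq_self.mpr hj] at hcard; omega
    exact ⟨mem_insert_self j s, (erase_insert hj).symm⟩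
  · rintro ⟨hj, rfl⟩
    exact insert_erase hj

lemma erase_eq_iff_notMem_and_eq_insert {s t : Finset α} (hcard : s.card = t.card + 1) (i : α) :
    s.erase i = t ↔ i ∉ t ∧ s = insert i t := by
  constructor
  · rintro rfl
    have hi : i ∈ s := by_contra fun hi => by rw [erase_eq_of_notMem hi] at hcard; omega
    exact ⟨notMem_erase i s, (insert_erase hi).symm⟩
  · rintro ⟨hi, rfl⟩
    exact erase_insert hi

end Finset

namespace MvPolynomial

variable {σ R : Type*}

lemma pderiv_pderiv_comm [CommRing R] (i j : σ) (p : MvPolynomial σ R) :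
    pderiv i (pderiv j p) = pderiv j (pderiv i p) := by
  classical
  have h : ⁅pderiv i, pderiv j⁆ = (0 : Derivation R (MvPolynomial σ R) (MvPolynomial σ R)) :=
    derivation_ext fun k => by
      rw [Derivation.commutator_apply]
      simp only [pderiv_X, Pi.single_apply]
      split_ifs <;> simp
  have := congr($h p)
  rwa [Derivation.commutator_apply, Derivation.zero_apply, sub_eq_zero] at this

lemma pderiv_prod_X [CommSemiring R] [DecidableEq σ] (τ : Finset σ) (j : σ) :
    pderiv j (∏ i ∈ τ, (X i : MvPolynomial σ R)) = if j ∈ τ then ∏ i ∈ τ.erase j, X i else 0 := by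
  induction τ using Finset.induction_on with
  | empty => simp
  | @insert a s ha ih =>
    rw [prod_insert ha, Derivation.leibniz, ih, smul_eq_mul, smul_eq_mul]
    by_cases h : j = a
    · subst h
      simp [ha, erase_insert ha]
    · rw [pderiv_X_of_ne (Ne.symm h), mul_zero, add_zero]
      by_cases hj : j ∈ s
      · rw [if_pos hj, if_pos (mem_insert_of_mem hj), erase_insert_of_ne (Ne.symm h),
          prod_insert (fun hc => ha (mem_of_mem_erase hc)), mul_comm]
      · rw [if_neg hj, mul_zero, if_neg (by simp [h, hj])]

variable [Fintype σ]

noncomputable def eulerOp [CommSemiring R] : MvPolynomial σ R →ₗ[R] MvPolynomial σ R :=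
  ∑ i, (LinearMap.mulLeft R (X i)).comp (pderiv i).toLinearMap

lemma eulerOp_apply [CommSemiring R] (p : MvPolynomial σ R) :
    eulerOp p = ∑ i, X i * pderiv i p := by
  simp [eulerOp]

lemma coeff_eulerOp [CommSemiring R] (d : σ →₀ ℕ) (p : MvPolynomial σ R) :
    coeff d (eulerOp p) = (∑ i, d i : ℕ) * coeff d p := by
  classical
  induction p using MvPolynomial.induction_on' with
  | monomial e c =>
    simp_rw [eulerOp_apply, X_mul_pderiv_monomial, ← sum_smul, coeff_smul]
    rw [coeff_monomial]
    split_ifs with h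
    · subst h; simp [nsmul_eq_mul]
    · simp
  | add p q hp hq => rw [map_add, coeff_add, coeff_add, hp, hq, mul_add]

lemma eq_zero_of_eulerOp_add_smul_eq_zero [CommRing R] [LinearOrder R] [IsStrictOrderedRing R]
    {c : R} (hc : 0 < c) {p : MvPolynomial σ R} (h : eulerOp p + c • p = 0) : p = 0 := by
  ext d
  have hd := congr(coeff d $h)
  rw [coeff_add, coeff_eulerOp, coeff_smul, coeff_zero, smul_eq_mul, ← add_mul] at hd
  exact (mul_eq_zero.mp hd).resolve_left (by positivity)

lemma pderiv_eulerOp [CommRing R] (j : σ) (p : MvPolynomial σ R) :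
    pderiv j (eulerOp p) = pderiv j p + eulerOp (pderiv j p) := by
  classical
  simp only [eulerOp_apply, map_sum, Derivation.leibniz, pderiv_X, smul_eq_mul,
    pderiv_pderiv_comm j, sum_add_distrib, Pi.single_apply, mul_ite, mul_one, mul_zero]
  simp [add_comm]

lemma eulerOp_prod_X [CommSemiring R] (τ : Finset σ) :
    eulerOp (∏ i ∈ τ, (X i : MvPolynomial σ R)) = (τ.card : R) • ∏ i ∈ τ, X i := by
  have h : (∏ i ∈ τ, (X i : MvPolynomial σ R)).IsHomogeneous τ.card := by
    simpa using IsHomogeneous.prod τ _ (fun _ => 1) (fun i _ => isHomogeneous_X R i)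
  rw [eulerOp_apply, h.sum_X_mul_pderiv, Nat.cast_smul_eq_nsmul]

end MvPolynomial

section Forms

variable {n : ℕ}

/-- Lets the operators be written as sums over all of `Fin n` instead of over attached subtypes. -/
noncomputable def extCoeff {m : ℕ} (ω : Form n m) (t : Finset (Fin n)) :
    MvPolynomial (Fin n) ℝ :=
  if h : t.card = m then ω ⟨t, h⟩ else 0

lemma extCoeff_of_card_eq {m : ℕ} (ω : Form n m) {t : Finset (Fin n)} (h : t.card = m) :
    extCoeff ω t = ω ⟨t, h⟩ := dif_pos h

lemma extCoeff_of_card_ne {m : ℕ} (ω : Form n m) {t : Finset (Fin n)} (h : t.card ≠ m) :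
    extCoeff ω t = 0 := dif_neg h

lemma extCoeff_monForm {m : ℕ} (τ : Finset (Fin n)) (σ : Idx n m) (u : Finset (Fin n)) :
    extCoeff (monForm n m τ σ) u = if u = σ.1 then ∏ i ∈ τ, X i else 0 := by
  by_cases h : u.card = m
  · rw [extCoeff_of_card_eq _ h]
    exact if_congr (by rw [Subtype.ext_iff]) rfl rfl
  · rw [extCoeff_of_card_ne _ h, if_neg (fun he : u = σ.1 => h (he ▸ σ.2))]

lemma monForm_apply {m : ℕ} (τ : Finset (Fin n)) (σ s : Idx n m) :
    monForm n m τ σ s = if s.1 = σ.1 then ∏ i ∈ τ, X i else 0 := by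
  rw [← extCoeff_monForm, extCoeff_of_card_eq _ s.2]

lemma sgn_mul_self (t : Finset (Fin n)) (i : Fin n) : sgn t i * sgn t i = 1 := by
  rw [sgn, ← mul_pow]; norm_num

lemma sgn_erase {t : Finset (Fin n)} {i : Fin n} (hi : i ∈ t) (j : Fin n) :
    sgn (t.erase i) j = (if i < j then -1 else 1) * sgn t j := by
  rw [sgn, sgn, filter_erase]
  split_ifs with h
  · have hmem : i ∈ t.filter (· < j) := mem_filter.mpr ⟨hi, h⟩
    obtain ⟨c, hc⟩ : ∃ c, (t.filter (· < j)).card = c + 1 :=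
      Nat.exists_eq_add_one.mpr (card_pos.mpr ⟨i, hmem⟩)
    rw [card_erase_of_mem hmem, hc, Nat.add_sub_cancel, pow_succ]
    ring
  · have hmem : i ∉ t.filter (· < j) := fun hc => h (mem_filter.mp hc).2
    rw [erase_eq_of_notMem hmem, one_mul]

lemma sgn_insert {t : Finset (Fin n)} {j : Fin n} (hj : j ∉ t) (i : Fin n) :
    sgn (insert j t) i = (if j < i then -1 else 1) * sgn t i := by
  rw [sgn, sgn, filter_insert]
  split_ifs with h
  · rw [card_insert_of_notMem (fun hc => hj (mem_filter.mp hc).1), pow_succ]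
    ring
  · rw [one_mul]

lemma sgn_erase_self {t : Finset (Fin n)} {i : Fin n} (hi : i ∈ t) :
    sgn (t.erase i) i = sgn t i := by
  rw [sgn_erase hi i, if_neg (lt_irrefl i), one_mul]

lemma sgn_insert_self {t : Finset (Fin n)} {j : Fin n} (hj : j ∉ t) :
    sgn (insert j t) j = sgn t j := by
  rw [sgn_insert hj j, if_neg (lt_irrefl j), one_mul]

lemma sgn_mul_sgn_erase_add_sgn_mul_sgn_insert {t : Finset (Fin n)} {i j : Fin n}
    (hi : i ∈ t) (hj : j ∉ t) (hij : i ≠ j) :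
    sgn t i * sgn (t.erase i) j + sgn t j * sgn (insert j t) i = 0 := by
  rw [sgn_erase hi j, sgn_insert hj i]
  rcases hij.lt_or_gt with h | h
  · rw [if_pos h, if_neg (asymm h)]; ring
  · rw [if_neg (asymm h), if_pos h]; ring

lemma sgn_mul_sgn_insert_add_sgn_mul_sgn_insert {t : Finset (Fin n)} {i j : Fin n}
    (hi : i ∉ t) (hj : j ∉ t) (hij : i ≠ j) :
    sgn t j * sgn (insert j t) i + sgn t i * sgn (insert i t) j = 0 := by
  rw [sgn_insert hj i, sgn_insert hi j]
  rcases hij.lt_or_gt with h | h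
  · rw [if_pos h, if_neg (asymm h)]; ring
  · rw [if_neg (asymm h), if_pos h]; ring

noncomputable def eulerForm (n m : ℕ) : Form n m →ₗ[ℝ] Form n m :=
  LinearMap.compLeft eulerOp (Idx n m)

lemma eulerForm_apply {m : ℕ} (ω : Form n m) (s : Idx n m) :
    eulerForm n m ω s = eulerOp (ω s) := rfl

variable {k : ℕ}

lemma codiff_apply (ω : Form n (k+1)) (s : Idx n k) :
    codiff n k ω s = -∑ j, sgn s.1 j • pderiv j (extCoeff ω (insert j s.1)) := by
  have hcompl : ∀ j ∈ univ, j ∉ s.1ᶜ → sgn s.1 j • pderiv j (extCoeff ω (insert j s.1)) = 0 := by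
    intro j _ hj
    rw [extCoeff_of_card_ne ω (by rw [insert_eq_self.mpr (by simpa using hj), s.2]; omega)]
    simp
  rw [← sum_subset (subset_univ _) hcompl, ← sum_attach]
  show -∑ i ∈ (s.1ᶜ).attach, sgn s.1 i.1 • pderiv i.1 (ω (insertIdx s (mem_compl.mp i.2))) = _
  congr 1
  refine sum_congr rfl fun i _ => ?_
  rw [extCoeff_of_card_eq ω (t := insert i.1 s.1) (insertIdx s (mem_compl.mp i.2)).2]
  rfl

lemma kappaDelta_apply (ω : Form n k) (s : Idx n (k+1)) :
    kappaDelta n k ω s = ∑ i, sgn s.1 i • (X i * extCoeff ω (s.1.erase i)) := by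
  have hcompl : ∀ i ∈ univ, i ∉ s.1 → sgn s.1 i • (X i * extCoeff ω (s.1.erase i)) = 0 := by
    intro i _ hi
    rw [extCoeff_of_card_ne ω (by rw [erase_eq_of_notMem hi, s.2]; omega)]
    simp
  rw [← sum_subset (subset_univ _) hcompl, ← sum_attach]
  refine sum_congr rfl fun i _ => ?_
  rw [extCoeff_of_card_eq ω (t := s.1.erase i.1) (eraseIdx s i.2).2]
  rfl

lemma extCoeff_codiff (ω : Form n (k+1)) (u : Finset (Fin n)) :
    extCoeff (codiff n k ω) u =
      if u.card = k then -∑ j, sgn u j • pderiv j (extCoeff ω (insert j u)) else 0 := by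
  split_ifs with h
  · rw [extCoeff_of_card_eq _ h, codiff_apply]
  · rw [extCoeff_of_card_ne _ h]

lemma extCoeff_kappaDelta (ω : Form n k) (u : Finset (Fin n)) :
    extCoeff (kappaDelta n k ω) u =
      if u.card = k + 1 then ∑ i, sgn u i • (X i * extCoeff ω (u.erase i)) else 0 := by
  split_ifs with h
  · rw [extCoeff_of_card_eq _ h, kappaDelta_apply]
  · rw [extCoeff_of_card_ne _ h]

lemma extCoeff_eulerForm {m : ℕ} (ω : Form n m) (u : Finset (Fin n)) :
    extCoeff (eulerForm n m ω) u = eulerOp (extCoeff ω u) := by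
  by_cases h : u.card = m
  · rw [extCoeff_of_card_eq _ h, extCoeff_of_card_eq _ h, eulerForm_apply]
  · rw [extCoeff_of_card_ne _ h, extCoeff_of_card_ne _ h, map_zero]

end Forms

section Identities

variable {n k : ℕ}

noncomputable def codiffCodiffTerm (ω : Form n (k+2)) (t : Finset (Fin n)) (j i : Fin n) :
    MvPolynomial (Fin n) ℝ :=
  if j ∈ t then 0
  else (sgn t j * sgn (insert j t) i) • pderiv j (pderiv i (extCoeff ω (insert i (insert j t))))

lemma codiff_codiff_apply (ω : Form n (k+2)) (s : Idx n k) :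
    codiff n k (codiff n (k+1) ω) s = ∑ j, ∑ i, codiffCodiffTerm ω s.1 j i := by
  rw [codiff_apply, ← sum_neg_distrib]
  refine sum_congr rfl fun j _ => ?_
  rw [extCoeff_codiff]
  by_cases hj : j ∈ s.1
  · rw [if_neg (by rw [insert_eq_self.mpr hj, s.2]; omega)]
    simp [codiffCodiffTerm, hj]
  · rw [if_pos (by rw [card_insert_of_notMem hj, s.2]), map_neg, smul_neg, neg_neg, map_sum,
      smul_sum]
    refine sum_congr rfl fun i _ => ?_
    rw [codiffCodiffTerm, if_neg hj, Derivation.map_smul, smul_smul]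

lemma codiffCodiffTerm_antisymm (ω : Form n (k+2)) {t : Finset (Fin n)} (ht : t.card = k)
    (i j : Fin n) : codiffCodiffTerm ω t j i = -codiffCodiffTerm ω t i j := by
  have hvanish : ∀ i, i ∉ t → extCoeff ω (insert i t) = 0 := fun i hi =>
    extCoeff_of_card_ne ω (by rw [card_insert_of_notMem hi, ht]; omega)
  by_cases hij : i = j
  · subst hij
    by_cases hi : i ∈ t
    · simp [codiffCodiffTerm, hi]
    · simp [codiffCodiffTerm, hi, hvanish i hi]
  by_cases hj : j ∈ t <;> by_cases hi : i ∈ t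
  · simp [codiffCodiffTerm, hj, hi]
  · simp [codiffCodiffTerm, hj, hi, hvanish i hi]
  · simp [codiffCodiffTerm, hj, hi, hvanish j hj]
  · rw [eq_neg_iff_add_eq_zero, codiffCodiffTerm, codiffCodiffTerm, if_neg hj, if_neg hi,
      insert_comm i j t, pderiv_pderiv_comm j i, ← add_smul,
      sgn_mul_sgn_insert_add_sgn_mul_sgn_insert hi hj hij, zero_smul]

lemma codiff_codiff (ω : Form n (k+2)) : codiff n k (codiff n (k+1) ω) = 0 := by
  funext s
  have hself : ∑ j, ∑ i, codiffCodiffTerm ω s.1 j i = -∑ j, ∑ i, codiffCodiffTerm ω s.1 j i :=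
    calc ∑ j, ∑ i, codiffCodiffTerm ω s.1 j i
        = ∑ j, ∑ i, -codiffCodiffTerm ω s.1 i j := by
          simp only [← codiffCodiffTerm_antisymm ω s.2]
      _ = -∑ j, ∑ i, codiffCodiffTerm ω s.1 j i := by rw [sum_comm]; simp only [sum_neg_distrib]
  rw [codiff_codiff_apply, CharZero.eq_neg_self_iff.mp hself]
  rfl

end Identities

section Homotopy

variable {n k : ℕ}

noncomputable def kappaDeltaCodiffTerm (ω : Form n (k+1)) (t : Finset (Fin n)) (i j : Fin n) :
    MvPolynomial (Fin n) ℝ :=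
  if i ∈ t then
    -((sgn t i * sgn (t.erase i) j) • (X i * pderiv j (extCoeff ω (insert j (t.erase i)))))
  else 0

noncomputable def codiffKappaDeltaTerm (ω : Form n (k+1)) (t : Finset (Fin n)) (i j : Fin n) :
    MvPolynomial (Fin n) ℝ :=
  if j ∈ t then 0
  else -((sgn t j * sgn (insert j t) i) • pderiv j (X i * extCoeff ω ((insert j t).erase i)))

lemma kappaDelta_codiff_apply (ω : Form n (k+1)) (s : Idx n (k+1)) :
    kappaDelta n k (codiff n k ω) s = ∑ i, ∑ j, kappaDeltaCodiffTerm ω s.1 i j := by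
  rw [kappaDelta_apply]
  refine sum_congr rfl fun i _ => ?_
  rw [extCoeff_codiff]
  by_cases hi : i ∈ s.1
  · rw [if_pos (by rw [card_erase_of_mem hi, s.2]; omega), mul_neg, smul_neg, mul_sum, smul_sum,
      ← sum_neg_distrib]
    refine sum_congr rfl fun j _ => ?_
    rw [kappaDeltaCodiffTerm, if_pos hi, mul_smul_comm, smul_smul]
  · rw [if_neg (by rw [erase_eq_of_notMem hi, s.2]; omega)]
    simp [kappaDeltaCodiffTerm, hi]

lemma codiff_kappaDelta_apply (ω : Form n (k+1)) (s : Idx n (k+1)) :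
    codiff n (k+1) (kappaDelta n (k+1) ω) s = ∑ i, ∑ j, codiffKappaDeltaTerm ω s.1 i j := by
  rw [codiff_apply, ← sum_neg_distrib, sum_comm]
  refine sum_congr rfl fun j _ => ?_
  rw [extCoeff_kappaDelta]
  by_cases hj : j ∈ s.1
  · rw [if_neg (by rw [insert_eq_self.mpr hj, s.2]; omega)]
    simp [codiffKappaDeltaTerm, hj]
  · rw [if_pos (by rw [card_insert_of_notMem hj, s.2]), map_sum, smul_sum, ← sum_neg_distrib]
    refine sum_congr rfl fun i _ => ?_
    rw [codiffKappaDeltaTerm, if_neg hj, Derivation.map_smul, smul_smul]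

lemma kappaDeltaCodiffTerm_add_codiffKappaDeltaTerm_of_ne (ω : Form n (k+1))
    {t : Finset (Fin n)} (ht : t.card = k + 1) {i j : Fin n} (hij : i ≠ j) :
    kappaDeltaCodiffTerm ω t i j + codiffKappaDeltaTerm ω t i j = 0 := by
  by_cases hi : i ∈ t <;> by_cases hj : j ∈ t
  · have hj' : j ∈ t.erase i := mem_erase.mpr ⟨hij.symm, hj⟩
    have hzero : extCoeff ω (insert j (t.erase i)) = 0 := extCoeff_of_card_ne ω
      (by rw [insert_eq_self.mpr hj', card_erase_of_mem hi, ht]; omega)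
    simp [kappaDeltaCodiffTerm, codiffKappaDeltaTerm, hi, hj, hzero]
  · -- the two terms carry the same coefficient of `ω`, with opposite signs
    rw [kappaDeltaCodiffTerm, codiffKappaDeltaTerm, if_pos hi, if_neg hj,
      erase_insert_of_ne hij.symm, pderiv_mul, pderiv_X_of_ne hij, zero_mul, zero_add,
      ← neg_add, ← add_smul, sgn_mul_sgn_erase_add_sgn_mul_sgn_insert hi hj hij, zero_smul,
      neg_zero]
  · simp [kappaDeltaCodiffTerm, codiffKappaDeltaTerm, hi, hj]
  · have hzero : extCoeff ω ((insert j t).erase i) = 0 := extCoeff_of_card_ne ω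
      (by rw [erase_eq_of_notMem (by simp [hi, hij]), card_insert_of_notMem hj, ht]; omega)
    simp [kappaDeltaCodiffTerm, codiffKappaDeltaTerm, hi, hj, hzero]

lemma kappaDeltaCodiffTerm_add_codiffKappaDeltaTerm_self (ω : Form n (k+1))
    (t : Finset (Fin n)) (i : Fin n) :
    kappaDeltaCodiffTerm ω t i i + codiffKappaDeltaTerm ω t i i
      = -(X i * pderiv i (extCoeff ω t)) - if i ∈ t then 0 else extCoeff ω t := by
  by_cases hi : i ∈ t
  · rw [kappaDeltaCodiffTerm, codiffKappaDeltaTerm, if_pos hi, if_pos hi, if_pos hi,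
      insert_erase hi, sgn_erase_self hi, sgn_mul_self, one_smul, add_zero, sub_zero]
  · rw [kappaDeltaCodiffTerm, codiffKappaDeltaTerm, if_neg hi, if_neg hi, if_neg hi,
      erase_insert hi, sgn_insert_self hi, sgn_mul_self, one_smul, zero_add, pderiv_mul,
      pderiv_X_self, one_mul]
    ring

lemma kappaDelta_codiff_add_codiff_kappaDelta (ω : Form n (k+1)) :
    kappaDelta n k (codiff n k ω) + codiff n (k+1) (kappaDelta n (k+1) ω)
      = -(eulerForm n (k+1) ω + ((n - (k+1) : ℕ) : ℝ) • ω) := by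
  funext s
  have hdiag : ∀ i, ∑ j, (kappaDeltaCodiffTerm ω s.1 i j + codiffKappaDeltaTerm ω s.1 i j)
      = -(X i * pderiv i (ω s)) - if i ∈ s.1ᶜ then ω s else 0 := fun i => by
    rw [sum_eq_single i
        (fun j _ hji => kappaDeltaCodiffTerm_add_codiffKappaDeltaTerm_of_ne ω s.2 (Ne.symm hji))
        (fun h => absurd (mem_univ i) h),
      kappaDeltaCodiffTerm_add_codiffKappaDeltaTerm_self, extCoeff_of_card_eq ω s.2]
    by_cases hi : i ∈ s.1 <;> simp [hi]
  have hcompl : s.1ᶜ.card = n - (k+1) := by rw [card_compl, s.2, Fintype.card_fin]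
  rw [Pi.add_apply, kappaDelta_codiff_apply, codiff_kappaDelta_apply, ← sum_add_distrib]
  simp_rw [← sum_add_distrib, hdiag, sum_sub_distrib, sum_neg_distrib, sum_ite_mem, univ_inter,
    sum_const, hcompl]
  rw [Pi.neg_apply, Pi.add_apply, Pi.smul_apply, eulerForm_apply, eulerOp_apply,
    Nat.cast_smul_eq_nsmul, sub_eq_add_neg, neg_add]

end Homotopy

section Monomials

variable {n k : ℕ}

lemma coe_eraseIdx (s : Idx n (k+1)) {i : Fin n} (hi : i ∈ s.1) :
    (eraseIdx s hi).1 = s.1.erase i := rfl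

lemma coe_insertIdx (s : Idx n k) {i : Fin n} (hi : i ∉ s.1) :
    (insertIdx s hi).1 = insert i s.1 := rfl

lemma codiff_monForm {τ : Finset (Fin n)} {σ : Idx n (k+1)} (hτ : τ ⊆ σ.1) :
    codiff n k (monForm n (k+1) τ σ)
      = -∑ i ∈ τ.attach, sgn σ.1 i • monForm n k (τ.erase i) (eraseIdx σ (hτ i.2)) := by
  funext s
  have hcard : s.1.card + 1 = σ.1.card := by rw [s.2, σ.2]
  simp only [Pi.neg_apply, Finset.sum_apply, Pi.smul_apply, monForm_apply, codiff_apply,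
    extCoeff_monForm, apply_ite (pderiv _), map_zero, pderiv_prod_X]
  have hout : ∀ j ∈ univ, j ∉ τ →
      sgn s.1 j • (if insert j s.1 = σ.1 then if j ∈ τ then ∏ i ∈ τ.erase j, X i else 0 else 0)
        = (0 : MvPolynomial (Fin n) ℝ) := fun j _ hj => by simp [hj]
  rw [← sum_subset (subset_univ τ) hout, ← sum_attach τ]
  refine congrArg _ (sum_congr rfl fun j _ => ?_)
  have hiff := insert_eq_iff_mem_and_eq_erase hcard j
  rw [if_pos j.2]
  split_ifs with hins hs hs
  · rw [hs, coe_eraseIdx, sgn_erase_self (hτ j.2)]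
  · exact absurd (hiff.mp hins).2 hs
  · exact absurd (hiff.mpr ⟨hτ j.2, hs⟩) hins
  · rw [smul_zero, smul_zero]

lemma kappaDelta_monForm {τ : Finset (Fin n)} {σ : Idx n k} (hτ : τ ⊆ σ.1) :
    kappaDelta n k (monForm n k τ σ)
      = ∑ i ∈ (σ.1ᶜ).attach,
          sgn σ.1 i • monForm n (k+1) (insert i.1 τ) (insertIdx σ (mem_compl.mp i.2)) := by
  funext s
  have hcard : s.1.card = σ.1.card + 1 := by rw [s.2, σ.2]
  simp only [Finset.sum_apply, Pi.smul_apply, monForm_apply, kappaDelta_apply, extCoeff_monForm]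
  have hout : ∀ i ∈ univ, i ∉ σ.1ᶜ →
      sgn s.1 i • (X i * if s.1.erase i = σ.1 then ∏ x ∈ τ, X x else 0)
        = (0 : MvPolynomial (Fin n) ℝ) := fun i _ hi => by
    have hiσ : i ∈ σ.1 := by simpa using hi
    rw [if_neg fun h : s.1.erase i = σ.1 => notMem_erase i s.1 (h ▸ hiσ), mul_zero, smul_zero]
  rw [← sum_subset (subset_univ _) hout, ← sum_attach]
  refine sum_congr rfl fun i _ => ?_
  have hi : i.1 ∉ σ.1 := mem_compl.mp i.2
  have hiff := erase_eq_iff_notMem_and_eq_insert hcard i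
  split_ifs with hers hs hs
  · rw [hs, coe_insertIdx, sgn_insert_self hi, prod_insert (fun h => hi (hτ h))]
  · exact absurd (hiff.mp hers).2 hs
  · exact absurd (hiff.mpr ⟨hi, hs⟩) hers
  · rw [mul_zero, smul_zero, smul_zero]

lemma eulerForm_monForm {m : ℕ} (τ : Finset (Fin n)) (σ : Idx n m) :
    eulerForm n m (monForm n m τ σ) = (τ.card : ℝ) • monForm n m τ σ := by
  funext s
  rw [eulerForm_apply, Pi.smul_apply, monForm_apply]
  split_ifs
  · exact eulerOp_prod_X τ
  · rw [map_zero, smul_zero]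

end Monomials

section StarWhitney

variable {n k : ℕ}

lemma Qs_le_comap_codiff : Qs n (k+1) ≤ (Qs n k).comap (codiff n k) := by
  refine Submodule.span_le.mpr ?_
  rintro _ ⟨τ, σ, -, hτ, rfl⟩
  rw [SetLike.mem_coe, Submodule.mem_comap, codiff_monForm hτ]
  refine neg_mem (sum_mem fun i _ => Submodule.smul_mem _ _ (Submodule.subset_span ?_))
  have hsub : τ.erase i ⊆ (eraseIdx σ (hτ i.2)).1 := erase_subset_erase _ hτ
  exact ⟨_, _, (card_le_card hsub).trans_eq (eraseIdx σ _).2, hsub, rfl⟩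

lemma Qs_le_comap_kappaDelta : Qs n k ≤ (Qs n (k+1)).comap (kappaDelta n k) := by
  refine Submodule.span_le.mpr ?_
  rintro _ ⟨τ, σ, -, hτ, rfl⟩
  rw [SetLike.mem_coe, Submodule.mem_comap, kappaDelta_monForm hτ]
  refine sum_mem fun i _ => Submodule.smul_mem _ _ (Submodule.subset_span ?_)
  have hsub : insert i.1 τ ⊆ (insertIdx σ (mem_compl.mp i.2)).1 := insert_subset_insert _ hτ
  exact ⟨_, _, (card_le_card hsub).trans_eq (insertIdx σ _).2, hsub, rfl⟩

lemma Qs_le_comap_eulerForm {m : ℕ} : Qs n m ≤ (Qs n m).comap (eulerForm n m) := by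
  refine Submodule.span_le.mpr ?_
  rintro _ ⟨τ, σ, hcard, hτ, rfl⟩
  rw [SetLike.mem_coe, Submodule.mem_comap, eulerForm_monForm]
  exact Submodule.smul_mem _ _ (Submodule.subset_span ⟨τ, σ, hcard, hτ, rfl⟩)

instance {m : ℕ} : FiniteDimensional ℝ (Qs n m) :=
  FiniteDimensional.span_of_finite ℝ <|
    (Set.finite_range fun p : Finset (Fin n) × Idx n m => monForm n m p.1 p.2).subset
      fun _ ⟨τ, σ, _, _, h⟩ => ⟨(τ, σ), h.symm⟩

lemma codiff_eulerForm (ω : Form n (k+1)) :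
    codiff n k (eulerForm n (k+1) ω) = eulerForm n k (codiff n k ω) + codiff n k ω := by
  funext s
  simp only [Pi.add_apply, eulerForm_apply, codiff_apply, extCoeff_eulerForm, pderiv_eulerOp,
    smul_add, sum_add_distrib, neg_add, map_neg, map_sum, map_smul]
  abel

lemma injective_eulerForm_add_smul {m : ℕ} {c : ℝ} (hc : 0 < c) :
    Function.Injective (eulerForm n m + c • LinearMap.id : Form n m →ₗ[ℝ] Form n m) := by
  refine (injective_iff_map_eq_zero _).mpr fun ω hω => funext fun s => ?_
  exact eq_zero_of_eulerOp_add_smul_eq_zero hc (congrFun hω s)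

lemma eulerForm_add_smul_mem_ker_codiff_inf_Qs (c : ℝ) {ω : Form n (k+1)}
    (hω : ω ∈ LinearMap.ker (codiff n k) ⊓ Qs n (k+1)) :
    (eulerForm n (k+1) + c • LinearMap.id : Form n (k+1) →ₗ[ℝ] Form n (k+1)) ω ∈ LinearMap.ker (codiff n k) ⊓ Qs n (k+1) := by
  obtain ⟨hker, hQs⟩ := Submodule.mem_inf.mp hω
  refine Submodule.mem_inf.mpr ⟨?_, add_mem (Qs_le_comap_eulerForm hQs) (Submodule.smul_mem _ c hQs)⟩
  rw [LinearMap.mem_ker] at hker ⊢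
  simp [codiff_eulerForm, hker]

end StarWhitney

/-- For `1 ≤ k+1 ≤ n-1`:
`N(δ_{k+1}, Q_1^{*,-}Λ^{k+1}) = R(δ_{k+2}, Q_1^{*,-}Λ^{k+2})`. -/
theorem stmt6 (n k : ℕ) (hk : k + 1 ≤ n - 1) :
    LinearMap.ker (codiff n k) ⊓ Qs n (k+1) = Submodule.map (codiff n (k+1)) (Qs n (k+2)) := by
  refine le_antisymm (fun ω hω => ?_) (Submodule.map_le_iff_le_comap.mpr fun η hη =>
    ⟨codiff_codiff η, Qs_le_comap_codiff hη⟩)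
  have hc : (0 : ℝ) < (n - (k+1) : ℕ) := Nat.cast_pos.mpr (by omega)
  obtain ⟨ξ, ⟨hξ, hξQs⟩, hBξ⟩ := (LinearMap.injOn_iff_surjOn
    fun _ => eulerForm_add_smul_mem_ker_codiff_inf_Qs _).mp
    (injective_eulerForm_add_smul hc).injOn (neg_mem hω)
  refine ⟨kappaDelta n (k+1) ξ, Qs_le_comap_kappaDelta hξQs, ?_⟩
  have hhom := kappaDelta_codiff_add_codiff_kappaDelta ξ
  rw [LinearMap.mem_ker.mp hξ, map_zero, zero_add] at hhom
  rw [hhom, ← neg_neg ω, ← hBξ]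
  rfl
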